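/- There exists an absolute constant γ > 0 with the following property: for every real M ≥ 2 and every sequence of positive real numbers t_1, t_2, t_3, ... satisfying t_{j+1}/t_j ≥ 1 + 1/M for all j ≥ 1, there exists a real number α such that ‖α t_j‖ ≥ γ / (M log M) for all j ≥ 1. -/

import Mathlib

/-!
Normalise `t 0 = 1`, put `ε = 2 ^ -s` with `2 ^ s ≍ M log M`, and give each `t j` the level `N`
with `2 ^ N ≍ t j / ε`. Prune the binary tree of dyadic intervals: at level `N`, discard every
interval meeting `{x : ‖x t j‖ < ε}` for some `j` of level `N`. At most `⌈M⌉` indices share a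
level, and each of them discards at most ten intervals below any interval of `s` levels up, so
as long as `40 ⌈M⌉ s ≤ 2 ^ s` the number of survivors grows by a factor `2 - 1 / s` per level.
Survivors thus exist at every level, and any point of their nested intersection is an `α`.
-/

open Filter

/-- Distance from a real number to the nearest integer. -/
noncomputable def nint (x : ℝ) : ℝ := |x - round x|

namespace PeresSchlag

open Finset

noncomputable section

lemma mem_Ioo_floor {a : ℝ} {L : ℕ} {k : ℤ} (h₁ : a < k) (h₂ : k < a + L) :
    k ∈ Ioo ⌊a⌋ (⌊a⌋ + L + 1) := by
  refine mem_Ioo.2 ⟨Int.floor_lt.2 h₁, ?_⟩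
  have := Int.lt_floor_add_one a
  exact_mod_cast (show (k : ℝ) < ⌊a⌋ + L + 1 by linarith)

lemma card_Ioo_floor (a : ℝ) (L : ℕ) : #(Ioo ⌊a⌋ (⌊a⌋ + L + 1)) = L := by
  rw [Int.card_Ioo, show ⌊a⌋ + L + 1 - ⌊a⌋ - 1 = L by ring, Int.toNat_natCast]

lemma card_le_of_forall_mem_Ioo {T : Finset ℕ} {a : ℝ} {L : ℕ}
    (h : ∀ k ∈ T, a < k ∧ (k : ℝ) < a + L) : #T ≤ L := by
  rw [← card_Ioo_floor a L, ← card_map (Nat.castEmbedding (R := ℤ))]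
  refine card_le_card fun k hk => ?_
  obtain ⟨k, hkT, rfl⟩ := mem_map.1 hk
  exact mem_Ioo_floor (by exact_mod_cast (h k hkT).1) (by exact_mod_cast (h k hkT).2)

def dyadic (n k : ℕ) : Set ℝ := Set.Icc (k / 2 ^ n) ((k + 1) / 2 ^ n)

lemma dyadic_subset_dyadic_div_pow (n i k : ℕ) : dyadic (n + i) k ⊆ dyadic n (k / 2 ^ i) := by
  have hdiv : ((k / 2 ^ i : ℕ) : ℝ) * 2 ^ i ≤ k := by
    exact_mod_cast Nat.div_mul_le_self k (2 ^ i)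
  have hsucc : (k : ℝ) + 1 ≤ ((k / 2 ^ i : ℕ) + 1) * 2 ^ i := by
    have := Nat.lt_div_mul_add (a := k) (Nat.two_pow_pos i)
    exact_mod_cast (show k + 1 ≤ (k / 2 ^ i + 1) * 2 ^ i by rw [add_mul, one_mul]; omega)
  rintro x ⟨hx₁, hx₂⟩
  rw [pow_add] at hx₁ hx₂
  constructor
  · calc ((k / 2 ^ i : ℕ) : ℝ) / 2 ^ n = (k / 2 ^ i : ℕ) * 2 ^ i / (2 ^ n * 2 ^ i) := by
          field_simp
      _ ≤ k / (2 ^ n * 2 ^ i) := by gcongr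
      _ ≤ x := hx₁
  · calc x ≤ (k + 1) / (2 ^ n * 2 ^ i) := hx₂
      _ ≤ ((k / 2 ^ i : ℕ) + 1) * 2 ^ i / (2 ^ n * 2 ^ i) := by gcongr
      _ = (((k / 2 ^ i : ℕ) : ℝ) + 1) / 2 ^ n := by field_simp

lemma left_mem_dyadic (n k : ℕ) : (k / 2 ^ n : ℝ) ∈ dyadic n k :=
  ⟨le_rfl, by gcongr; linarith⟩

def children (T : Finset ℕ) : Finset ℕ := T.biUnion fun k => {2 * k, 2 * k + 1}

lemma mem_children {T : Finset ℕ} {k : ℕ} : k ∈ children T ↔ k / 2 ∈ T := by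
  simp only [children, mem_biUnion, mem_insert, mem_singleton]
  constructor
  · rintro ⟨l, hl, rfl | rfl⟩ <;> simpa [Nat.mul_add_div] using hl
  · exact fun h => ⟨k / 2, h, by omega⟩

lemma card_children (T : Finset ℕ) : #(children T) = 2 * #T := by
  rw [children, card_biUnion, sum_const_nat fun k _ => ?_, mul_comm]
  · exact card_pair (by omega)
  · intro k _ l _ hkl
    simp only [Function.onFun, disjoint_left, mem_insert, mem_singleton]
    omega

open Classical in
/-- `k ∈ survivors bad n` stands for `dyadic n k`, kept if neither it nor an ancestor is `bad`. -/
def survivors (bad : ℕ → ℕ → Prop) : ℕ → Finset ℕ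
  | 0 => {0}
  | n + 1 => (children (survivors bad n)).filter fun k => ¬ bad (n + 1) k

section Survivors

variable {bad : ℕ → ℕ → Prop}

open Classical in
lemma mem_survivors_succ {n k : ℕ} :
    k ∈ survivors bad (n + 1) ↔ k / 2 ∈ survivors bad n ∧ ¬ bad (n + 1) k := by
  rw [survivors, mem_filter, mem_children]

lemma div_pow_mem_survivors {n k : ℕ} (i : ℕ) (h : k ∈ survivors bad (n + i)) :
    k / 2 ^ i ∈ survivors bad n := by
  induction i generalizing k with
  | zero => simpa using h
  | succ i ih =>
    rw [pow_succ', ← Nat.div_div_eq_div_mul]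
    exact ih (mem_survivors_succ.1 h).1

lemma div_pow_mem_survivors_of_mem_children {n k i : ℕ} (h : k ∈ children (survivors bad n))
    (hi : 1 ≤ i) (hin : i ≤ n + 1) : k / 2 ^ i ∈ survivors bad (n + 1 - i) := by
  have h' := div_pow_mem_survivors (n := n + 1 - i) (i - 1) (k := k / 2)
    (by rw [show n + 1 - i + (i - 1) = n by omega]; exact mem_children.1 h)
  rwa [Nat.div_div_eq_div_mul, ← pow_succ', Nat.sub_add_cancel hi] at h'

open Classical in
lemma card_survivors_succ_add (n : ℕ) :
    #(survivors bad (n + 1)) + #((children (survivors bad n)).filter (bad (n + 1)))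
      = 2 * #(survivors bad n) := by
  rw [← card_children, survivors, add_comm]
  exact card_filter_add_card_filter_not _

end Survivors

lemma two_pow_div_four_le_pow {s : ℕ} (hs : 1 ≤ s) : (2 : ℝ) ^ s / 4 ≤ (2 - 1 / s) ^ (s - 1) := by
  have hs' : (1 : ℝ) ≤ s := by exact_mod_cast hs
  have hsmall : 1 / (2 * s : ℝ) ≤ 2 := by rw [div_le_iff₀ (by positivity)]; linarith
  have hbern := one_add_mul_le_pow (a := -(1 / (2 * s) : ℝ)) (by linarith) (s - 1)
  calc (2 : ℝ) ^ s / 4 = 2 ^ (s - 1) * (1 / 2) := by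
        rw [← pow_sub_one_mul (by omega : s ≠ 0)]; ring
    _ ≤ 2 ^ (s - 1) * (1 + (s - 1 : ℕ) * -(1 / (2 * s))) := by
        gcongr
        rw [Nat.cast_sub hs, Nat.cast_one]
        field_simp
        linarith
    _ ≤ 2 ^ (s - 1) * (1 + -(1 / (2 * s))) ^ (s - 1) := by gcongr
    _ = (2 - 1 / s) ^ (s - 1) := by
        rw [← mul_pow]
        congr 1
        field_simp
        ring

section Pruning

variable {bad : ℕ → ℕ → Prop} {s c : ℕ}

open Classical in
/-- Each level removes at most a `1 / s` fraction of the children, because the removals are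
charged to the level `s - 1` generations back, which is smaller by a factor `2 ^ s / 4`. -/
theorem card_survivors_succ_ge (hs : 1 ≤ s) (hc : 4 * c * s ≤ 2 ^ s)
    (hlow : ∀ n ≤ s, ∀ k, ¬ bad n k)
    (hbad : ∀ n, s ≤ n →
      #((children (survivors bad n)).filter (bad (n + 1))) ≤ c * #(survivors bad (n + 1 - s)))
    (n : ℕ) : (2 - 1 / s : ℝ) * #(survivors bad n) ≤ #(survivors bad (n + 1)) := by
  induction n using Nat.strong_induction_on with
  | _ n ih =>
  have hs' : (1 : ℝ) ≤ s := by exact_mod_cast hs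
  have hsum : (#(survivors bad (n + 1)) : ℝ)
      + #((children (survivors bad n)).filter (bad (n + 1))) = 2 * #(survivors bad n) := by
    exact_mod_cast card_survivors_succ_add n
  have hsplit : (2 - 1 / s : ℝ) * #(survivors bad n)
      = 2 * #(survivors bad n) - #(survivors bad n) / s := by ring
  rcases lt_or_ge n s with hns | hsn
  · rw [filter_false_of_mem fun k _ => hlow (n + 1) hns k, card_empty, Nat.cast_zero,
      add_zero] at hsum
    rw [hsplit, hsum]
    have : (0 : ℝ) ≤ #(survivors bad n) / s := by positivity
    linarith
  · set m := n + 1 - s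
    have hgeom : (2 - 1 / s : ℝ) ^ (s - 1) * #(survivors bad m) ≤ #(survivors bad n) := by
      have := geom_le (u := fun i => (#(survivors bad (m + i)) : ℝ)) (c := 2 - 1 / s)
        (by linarith [div_le_one_of_le₀ hs' (by positivity : (0 : ℝ) ≤ s)]) (s - 1)
        fun i hi => ih (m + i) (by omega)
      simpa [show m + (s - 1) = n by omega] using this
    have hcs : (c * s : ℝ) ≤ 2 ^ s / 4 := by
      have : (4 * c * s : ℝ) ≤ 2 ^ s := by exact_mod_cast hc
      linarith
    have hrem : (c : ℝ) * #(survivors bad m) ≤ #(survivors bad n) / s := by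
      rw [le_div_iff₀ (by positivity)]
      calc (c : ℝ) * #(survivors bad m) * s = (c * s) * #(survivors bad m) := by ring
        _ ≤ (2 - 1 / s) ^ (s - 1) * #(survivors bad m) := by
          gcongr
          exact hcs.trans (two_pow_div_four_le_pow hs)
        _ ≤ #(survivors bad n) := hgeom
    have hbadR : (#((children (survivors bad n)).filter (bad (n + 1))) : ℝ)
        ≤ c * #(survivors bad m) := by exact_mod_cast hbad n hsn
    linarith

open Classical in
theorem survivors_nonempty (hs : 1 ≤ s) (hc : 4 * c * s ≤ 2 ^ s)
    (hlow : ∀ n ≤ s, ∀ k, ¬ bad n k)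
    (hbad : ∀ n, s ≤ n →
      #((children (survivors bad n)).filter (bad (n + 1))) ≤ c * #(survivors bad (n + 1 - s)))
    (n : ℕ) : (survivors bad n).Nonempty := by
  rw [← card_pos]
  induction n with
  | zero => simp [survivors]
  | succ n ih =>
    have hθ : (1 : ℝ) ≤ 2 - 1 / s := by
      linarith [div_le_one_of_le₀ (show (1 : ℝ) ≤ s by exact_mod_cast hs) (by positivity)]
    have hn : (1 : ℝ) ≤ #(survivors bad n) := by exact_mod_cast ih
    have := card_survivors_succ_ge hs hc hlow hbad n
    exact_mod_cast (show (0 : ℝ) < #(survivors bad (n + 1)) by nlinarith)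

lemma exists_forall_mem_dyadic_survivors (h : ∀ n, (survivors bad n).Nonempty) :
    ∃ α : ℝ, ∀ n, ∃ k ∈ survivors bad n, α ∈ dyadic n k := by
  set C : ℕ → Set ℝ := fun n => ⋃ k ∈ survivors bad n, dyadic n k
  have hanti : ∀ n, C (n + 1) ⊆ C n := fun n => Set.iUnion₂_subset fun k hk =>
    (dyadic_subset_dyadic_div_pow n 1 k).trans
      (Set.subset_biUnion_of_mem (u := fun k => dyadic n k) (div_pow_mem_survivors 1 hk))
  have hne : ∀ n, (C n).Nonempty := fun n =>
    let ⟨k, hk⟩ := h n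
    ⟨_, Set.mem_biUnion hk (left_mem_dyadic n k)⟩
  obtain ⟨α, hα⟩ := IsCompact.nonempty_iInter_of_sequence_nonempty_isCompact_isClosed C hanti hne
    ((survivors bad 0).isCompact_biUnion fun _ _ => isCompact_Icc)
    fun n => isClosed_biUnion_finset fun _ _ => isClosed_Icc
  exact ⟨α, fun n => by simpa [C] using Set.mem_iInter.1 hα n⟩

end Pruning

section Lacunary

variable {u : ℕ → ℝ} {M : ℝ}

lemma monotone_of_lacunary (hM : 0 < M) (hu : ∀ j, 0 < u j)
    (hq : ∀ j, 1 + 1 / M ≤ u (j + 1) / u j) : Monotone u :=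
  monotone_nat_of_le_succ fun j => by
    have h := (le_div_iff₀ (hu j)).1 (hq j)
    have : 0 < 1 / M * u j := by have := hu j; positivity
    linarith

lemma one_add_div_mul_le_of_lacunary (hM : 0 < M) (hu : ∀ j, 0 < u j)
    (hq : ∀ j, 1 + 1 / M ≤ u (j + 1) / u j) (j d : ℕ) : (1 + d / M) * u j ≤ u (j + d) := by
  have hgeom := geom_le (u := fun i => u (j + i)) (c := 1 + 1 / M) (by positivity) d
    fun i _ => (le_div_iff₀ (hu (j + i))).1 (hq (j + i))
  calc (1 + d / M) * u j = (1 + d * (1 / M)) * u j := by ring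
    _ ≤ (1 + 1 / M) ^ d * u j := by
        gcongr
        · exact (hu j).le
        · exact one_add_mul_le_pow (by have : 0 < 1 / M := by positivity
                                       linarith) d
    _ ≤ u (j + d) := by simpa using hgeom

/-- At this level the dyadic intervals are about as long as the bands `{x : ‖x u j‖ < 2 ^ -s}`
are wide. -/
def level (u : ℕ → ℝ) (s j : ℕ) : ℕ := Nat.log 2 ⌊2 ^ s * u j⌋₊ + 1

lemma level_spec {s j : ℕ} (hu : 1 ≤ u j) :
    s + 1 ≤ level u s j ∧ (2 : ℝ) ^ (level u s j - 1) ≤ 2 ^ s * u j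
      ∧ 2 ^ s * u j < 2 ^ level u s j := by
  set x : ℝ := 2 ^ s * u j
  have hx : (2 : ℝ) ^ s ≤ x := le_mul_of_one_le_right (by positivity) hu
  have hfl : 2 ^ s ≤ ⌊x⌋₊ := Nat.le_floor (by exact_mod_cast hx)
  refine ⟨by simpa [level] using Nat.le_log_of_pow_le one_lt_two hfl, ?_, ?_⟩
  · rw [level, Nat.add_sub_cancel]
    calc (2 : ℝ) ^ Nat.log 2 ⌊x⌋₊ ≤ ⌊x⌋₊ := by
          exact_mod_cast Nat.pow_log_le_self 2 ((Nat.two_pow_pos s).trans_le hfl).ne'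
      _ ≤ x := Nat.floor_le (by positivity)
  · calc x < ⌊x⌋₊ + 1 := Nat.lt_floor_add_one x
      _ ≤ 2 ^ level u s j := by exact_mod_cast Nat.lt_pow_succ_log_self one_lt_two ⌊x⌋₊

/-- Terms of a common level differ by a factor less than `2`, and `u` doubles within `⌈M⌉` steps. -/
lemma exists_Ico_of_level_eq (hM : 0 < M) (hu : ∀ j, 1 ≤ u j)
    (hq : ∀ j, 1 + 1 / M ≤ u (j + 1) / u j) (s N : ℕ) :
    ∃ j₀, ∀ j, level u s j = N → j ∈ Ico j₀ (j₀ + ⌈M⌉₊) := by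
  classical
  by_cases hex : ∃ j, level u s j = N
  swap
  · exact ⟨0, fun j hj => absurd ⟨j, hj⟩ hex⟩
  set j₀ := Nat.find hex
  refine ⟨j₀, fun j hj => mem_Ico.2 ⟨Nat.find_min' hex hj, not_le.1 fun hlt => ?_⟩⟩
  have hj₀j : j₀ ≤ j := Nat.find_min' hex hj
  have hd : M ≤ (j - j₀ : ℕ) := (Nat.le_ceil M).trans (by exact_mod_cast (by omega : ⌈M⌉₊ ≤ j - j₀))
  have hgrowth :=
    one_add_div_mul_le_of_lacunary hM (fun j => one_pos.trans_le (hu j)) hq j₀ (j - j₀)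
  rw [Nat.add_sub_cancel' hj₀j] at hgrowth
  have hdouble : 2 * u j₀ ≤ u j := by
    have : 1 ≤ ((j - j₀ : ℕ) : ℝ) / M := (one_le_div hM).2 hd
    nlinarith [hu j₀]
  obtain ⟨hN, hlo, -⟩ := level_spec (s := s) (hu j₀)
  obtain ⟨-, -, hhi⟩ := level_spec (s := s) (hu j)
  rw [Nat.find_spec hex] at hN hlo
  rw [hj, ← pow_sub_one_mul (by omega : N ≠ 0)] at hhi
  nlinarith [pow_pos (two_pos (α := ℝ)) s]

def IsBad (u : ℕ → ℝ) (s n k : ℕ) : Prop :=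
  ∃ j, level u s j = n ∧ ∃ x ∈ dyadic n k, ∃ p : ℤ, |x * u j - p| < 1 / 2 ^ s

lemma two_mul_one_div_two_pow_le_one {s : ℕ} (hs : 1 ≤ s) : 2 * (1 / 2 ^ s : ℝ) ≤ 1 := by
  rw [mul_one_div, div_le_one (by positivity)]
  exact le_self_pow₀ one_le_two (by omega)

/-- Within an interval of level `N - s`, the values `x v` range over an interval of length `< 1`,
so only two integers are within `2 ^ -s` of them. -/
lemma mem_Ioo_of_abs_sub_lt {s N K : ℕ} {v x : ℝ} {p : ℤ} (hs : 1 ≤ s) (hsN : s ≤ N)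
    (hv : 0 < v) (hv' : 2 ^ s * v < 2 ^ N) (hx : x ∈ dyadic (N - s) K)
    (hxp : |x * v - p| < 1 / 2 ^ s) :
    p ∈ Ioo ⌊K / 2 ^ (N - s) * v - 1 / 2 ^ s⌋
      (⌊K / 2 ^ (N - s) * v - 1 / 2 ^ s⌋ + (2 : ℕ) + 1) := by
  obtain ⟨hx₁, hx₂⟩ := hx
  rw [abs_lt] at hxp
  have hlen : v / 2 ^ (N - s) < 1 := by
    rw [div_lt_one (by positivity), ← mul_lt_mul_iff_right₀ (pow_pos two_pos s), ← pow_add,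
      Nat.add_sub_cancel' hsN]
    exact hv'
  have h₁ : K / 2 ^ (N - s) * v ≤ x * v := by gcongr
  have h₂ : x * v ≤ K / 2 ^ (N - s) * v + v / 2 ^ (N - s) :=
    calc x * v ≤ (K + 1) / 2 ^ (N - s) * v := by gcongr
      _ = K / 2 ^ (N - s) * v + v / 2 ^ (N - s) := by ring
  have := two_mul_one_div_two_pow_le_one hs
  exact mem_Ioo_floor (by linarith) (by push_cast; linarith)

/-- For fixed `p`, the set `{x : |x v - p| < 2 ^ -s}` has length `≤ 4 / 2 ^ N`, so it meets at
most five intervals of level `N`. -/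
lemma card_le_five_of_abs_sub_lt {s N : ℕ} {v : ℝ} {p : ℤ} (hN : 1 ≤ N)
    (hv : (2 : ℝ) ^ (N - 1) ≤ 2 ^ s * v) {T : Finset ℕ}
    (hT : ∀ k ∈ T, ∃ x ∈ dyadic N k, |x * v - p| < 1 / 2 ^ s) : #T ≤ 5 := by
  have hv0 : 0 < v := pos_of_mul_pos_right ((pow_pos two_pos _).trans_le hv) (by positivity)
  refine card_le_of_forall_mem_Ioo (a := (p - 1 / 2 ^ s) * 2 ^ N / v - 1) fun k hk => ?_
  obtain ⟨x, ⟨hx₁, hx₂⟩, hxp⟩ := hT k hk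
  rw [abs_lt] at hxp
  rw [div_le_iff₀ (by positivity)] at hx₁
  rw [le_div_iff₀ (by positivity)] at hx₂
  have h₁ : (p - 1 / 2 ^ s) * 2 ^ N / v < x * 2 ^ N := by
    rw [div_lt_iff₀ hv0]
    nlinarith [pow_pos (two_pos (α := ℝ)) N]
  have h₂ : x * 2 ^ N < (p + 1 / 2 ^ s) * 2 ^ N / v := by
    rw [lt_div_iff₀ hv0]
    nlinarith [pow_pos (two_pos (α := ℝ)) N]
  have h₃ : (p + 1 / 2 ^ s) * 2 ^ N / v ≤ (p - 1 / 2 ^ s) * 2 ^ N / v + 4 := by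
    rw [← sub_le_iff_le_add', ← sub_div, div_le_iff₀ hv0, ← pow_sub_one_mul (by omega : N ≠ 0)]
    have : (1 / 2 ^ s : ℝ) * 2 ^ s = 1 := by field_simp
    nlinarith
  push_cast
  constructor <;> linarith

open Classical in
lemma card_filter_near_int_le {s N K : ℕ} {v : ℝ} (hs : 1 ≤ s) (hsN : s ≤ N)
    (hv : (2 : ℝ) ^ (N - 1) ≤ 2 ^ s * v) (hv' : 2 ^ s * v < 2 ^ N) (T : Finset ℕ) :
    #((T.filter fun k => ∃ x ∈ dyadic N k, ∃ p : ℤ, |x * v - p| < 1 / 2 ^ s).filter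
      fun k => k / 2 ^ s = K) ≤ 10 := by
  set F := (T.filter fun k => ∃ x ∈ dyadic N k, ∃ p : ℤ, |x * v - p| < 1 / 2 ^ s).filter
    fun k => k / 2 ^ s = K
  have hv0 : 0 < v := pos_of_mul_pos_right ((pow_pos two_pos _).trans_le hv) (by positivity)
  set a : ℝ := K / 2 ^ (N - s) * v - 1 / 2 ^ s
  calc #F ≤ #((Ioo ⌊a⌋ (⌊a⌋ + (2 : ℕ) + 1)).biUnion fun p =>
        F.filter fun k => ∃ x ∈ dyadic N k, |x * v - p| < 1 / 2 ^ s) := by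
        refine card_le_card fun k hk => ?_
        obtain ⟨hkT, hkK⟩ := mem_filter.1 hk
        obtain ⟨x, hx, p, hxp⟩ := (mem_filter.1 hkT).2
        have hxK : x ∈ dyadic (N - s) K := by
          rw [← hkK]
          exact dyadic_subset_dyadic_div_pow (N - s) s k (by rwa [Nat.sub_add_cancel hsN])
        exact mem_biUnion.2 ⟨p, mem_Ioo_of_abs_sub_lt hs hsN hv0 hv' hxK hxp,
          mem_filter.2 ⟨hk, x, hx, hxp⟩⟩
    _ ≤ #(Ioo ⌊a⌋ (⌊a⌋ + (2 : ℕ) + 1)) * 5 := card_biUnion_le_card_mul _ _ _ fun p _ =>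
        card_le_five_of_abs_sub_lt (by omega) hv fun k hk => (mem_filter.1 hk).2
    _ = 10 := by rw [card_Ioo_floor]

open Classical in
lemma card_filter_near_int_le_mul {bad : ℕ → ℕ → Prop} {s n j : ℕ} (hs : 1 ≤ s) (hsn : s ≤ n)
    (hu : 1 ≤ u j) (hj : level u s j = n + 1) :
    #((children (survivors bad n)).filter
      fun k => ∃ x ∈ dyadic (n + 1) k, ∃ p : ℤ, |x * u j - p| < 1 / 2 ^ s)
      ≤ 10 * #(survivors bad (n + 1 - s)) := by
  obtain ⟨-, hlo, hhi⟩ := level_spec (s := s) hu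
  rw [hj] at hlo hhi
  refine (card_le_mul_card_image _ 10 fun K _ =>
    card_filter_near_int_le hs (by omega) hlo hhi _).trans ?_
  gcongr
  intro K hK
  obtain ⟨k, hk, rfl⟩ := mem_image.1 hK
  exact div_pow_mem_survivors_of_mem_children (mem_filter.1 hk).1 hs (by omega)

open Classical in
lemma card_filter_isBad_le (hM : 0 < M) (hu : ∀ j, 1 ≤ u j)
    (hq : ∀ j, 1 + 1 / M ≤ u (j + 1) / u j) {s n : ℕ} (hs : 1 ≤ s) (hsn : s ≤ n) :
    #((children (survivors (IsBad u s) n)).filter (IsBad u s (n + 1)))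
      ≤ 10 * ⌈M⌉₊ * #(survivors (IsBad u s) (n + 1 - s)) := by
  obtain ⟨j₀, hj₀⟩ := exists_Ico_of_level_eq hM hu hq s (n + 1)
  set T := children (survivors (IsBad u s) n)
  set J := (Ico j₀ (j₀ + ⌈M⌉₊)).filter fun j => level u s j = n + 1
  calc _ ≤ #(J.biUnion fun j =>
        T.filter fun k => ∃ x ∈ dyadic (n + 1) k, ∃ p : ℤ, |x * u j - p| < 1 / 2 ^ s) := by
        refine card_le_card fun k hk => ?_
        obtain ⟨hkT, j, hj, hnear⟩ := mem_filter.1 hk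
        exact mem_biUnion.2 ⟨j, mem_filter.2 ⟨hj₀ j hj, hj⟩, mem_filter.2 ⟨hkT, hnear⟩⟩
    _ ≤ #J * (10 * #(survivors (IsBad u s) (n + 1 - s))) :=
        card_biUnion_le_card_mul _ _ _ fun j hj =>
          card_filter_near_int_le_mul hs hsn (hu j) (mem_filter.1 hj).2
    _ ≤ ⌈M⌉₊ * (10 * #(survivors (IsBad u s) (n + 1 - s))) := by
        gcongr
        exact (card_filter_le _ _).trans (by simp)
    _ = _ := by ring

theorem exists_forall_one_div_two_pow_le_nint (hM : 0 < M) (hu : ∀ j, 1 ≤ u j)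
    (hq : ∀ j, 1 + 1 / M ≤ u (j + 1) / u j) {s : ℕ} (hs : 1 ≤ s)
    (hsM : 40 * ⌈M⌉₊ * s ≤ 2 ^ s) : ∃ α : ℝ, ∀ j, 1 / 2 ^ s ≤ nint (α * u j) := by
  have hlow : ∀ n ≤ s, ∀ k, ¬ IsBad u s n k := fun n hn k ⟨j, hj, _⟩ => by
    have := (level_spec (s := s) (hu j)).1
    omega
  obtain ⟨α, hα⟩ := exists_forall_mem_dyadic_survivors <| survivors_nonempty hs
    ((by ring : 4 * (10 * ⌈M⌉₊) * s = 40 * ⌈M⌉₊ * s).trans_le hsM) hlow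
    fun n hsn => card_filter_isBad_le hM hu hq hs hsn
  refine ⟨α, fun j => not_lt.1 fun hlt => ?_⟩
  obtain ⟨n, hn⟩ : ∃ n, level u s j = n + 1 := ⟨level u s j - 1, by
    have := (level_spec (s := s) (hu j)).1
    omega⟩
  obtain ⟨k, hk, hαk⟩ := hα (n + 1)
  exact (mem_survivors_succ.1 hk).2 ⟨j, hn, α, hαk, round (α * u j), hlt⟩

end Lacunary

lemma exists_mul_le_two_pow (w : ℕ) (hw : w ≠ 0) :
    ∃ s : ℕ, 1 ≤ s ∧ 40 * w * s ≤ 2 ^ s ∧ 2 ^ s ≤ 2048 * w * (Nat.log 2 w + 21) := by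
  set a := Nat.log 2 w + 1
  set c := Nat.log 2 (a + 20) + 1
  have hwa : w < 2 ^ a := Nat.lt_pow_succ_log_self one_lt_two w
  have haw : 2 ^ a ≤ 2 * w := by
    rw [pow_succ']
    exact Nat.mul_le_mul_left 2 (Nat.pow_log_le_self 2 hw)
  have hac : a + 20 < 2 ^ c := Nat.lt_pow_succ_log_self one_lt_two _
  have hca : 2 ^ c ≤ 2 * (a + 20) := by
    rw [pow_succ']
    exact Nat.mul_le_mul_left 2 (Nat.pow_log_le_self 2 (by omega))
  have hc : c ≤ a + 20 := Nat.log_lt_self 2 (by omega)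
  have hpow : 2 ^ (a + c + 9) = 512 * 2 ^ a * 2 ^ c := by rw [pow_add, pow_add]; ring
  refine ⟨a + c + 9, by omega, ?_, ?_⟩
  · rw [hpow]
    calc 40 * w * (a + c + 9) ≤ 40 * 2 ^ a * (2 * (a + 20)) := by gcongr; omega
      _ ≤ 512 * 2 ^ a * 2 ^ c := by nlinarith
  · rw [hpow]
    calc 512 * 2 ^ a * 2 ^ c ≤ 512 * (2 * w) * (2 * (a + 20)) := by gcongr
      _ = 2048 * w * (Nat.log 2 w + 21) := by ring

lemma exists_two_pow_le_mul_log {M : ℝ} (hM : 2 ≤ M) :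
    ∃ s : ℕ, 1 ≤ s ∧ 40 * ⌈M⌉₊ * s ≤ 2 ^ s ∧ (2 : ℝ) ^ s ≤ 2 ^ 18 * (M * Real.log M) := by
  set w := ⌈M⌉₊
  have hw0 : w ≠ 0 := (Nat.ceil_pos.2 (by linarith)).ne'
  obtain ⟨s, hs, hsM, hs2⟩ := exists_mul_le_two_pow w hw0
  refine ⟨s, hs, hsM, ?_⟩
  have hw : (w : ℝ) ≤ 2 * M := (Nat.ceil_lt_add_one (by linarith)).le.trans (by linarith)
  have hlog2 : 0.69 < Real.log 2 := lt_trans (by norm_num) Real.log_two_gt_d9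
  have hlogM : Real.log 2 ≤ Real.log M := Real.log_le_log (by norm_num) hM
  have hlogw : (Nat.log 2 w : ℝ) * Real.log 2 ≤ 2 * Real.log M := by
    have h : (2 : ℝ) ^ Nat.log 2 w ≤ M ^ 2 :=
      calc (2 : ℝ) ^ Nat.log 2 w ≤ w := by exact_mod_cast Nat.pow_log_le_self 2 hw0
        _ ≤ M ^ 2 := by nlinarith
    simpa [Real.log_pow] using Real.log_le_log (by positivity) h
  have hsum : (Nat.log 2 w + 21 : ℝ) ≤ 40 * Real.log M := by nlinarith
  calc (2 : ℝ) ^ s ≤ 2048 * w * (Nat.log 2 w + 21) := by exact_mod_cast hs2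
    _ ≤ 2048 * (2 * M) * (40 * Real.log M) := by gcongr
    _ ≤ 2 ^ 18 * (M * Real.log M) := by nlinarith [Real.log_pos (by linarith : (1 : ℝ) < M)]

end

end PeresSchlag

/-- Peres–Schlag's theorem on lacunary sequences. -/
theorem stmt9 : ∃ γ : ℝ, 0 < γ ∧ ∀ M : ℝ, 2 ≤ M → ∀ t : ℕ → ℝ,
    (∀ j, 0 < t j) → (∀ j, 1 + 1 / M ≤ t (j + 1) / t j) →
    ∃ α : ℝ, ∀ j, γ / (M * Real.log M) ≤ nint (α * t j) := by
  refine ⟨1 / 2 ^ 18, by positivity, fun M hM t ht hq => ?_⟩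
  have hM0 : 0 < M := by linarith
  obtain ⟨s, hs, hsM, hslog⟩ := PeresSchlag.exists_two_pow_le_mul_log hM
  have hmono := PeresSchlag.monotone_of_lacunary hM0 ht hq
  obtain ⟨α, hα⟩ := PeresSchlag.exists_forall_one_div_two_pow_le_nint (u := fun j => t j / t 0)
    hM0 (fun j => (one_le_div (ht 0)).2 (hmono (Nat.zero_le j)))
    (fun j => by simpa only [div_div_div_cancel_right₀ (ht 0).ne'] using hq j) hs hsM
  have hγ : 1 / 2 ^ 18 / (M * Real.log M) ≤ 1 / 2 ^ s := by
    have hMlog : 0 < M * Real.log M := mul_pos hM0 (Real.log_pos (by linarith))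
    rw [div_div, one_div_le_one_div (by positivity) (by positivity)]
    exact hslog
  refine ⟨α / t 0, fun j => ?_⟩
  rw [div_mul_eq_mul_div, mul_div_assoc]
  exact hγ.trans (hα j)
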